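/- arXiv:1810.11863 — 3 statements merged into one kernel-verified Lean document; each statement's English description precedes it below -/
import Mathlib

section
/- Let S be an ε-synchronization string of length n, and let 1 ≤ i₁ < i₂ < ⋯ < i_l ≤ n and 1 ≤ j₁ < j₂ < ⋯ < j_l ≤ n be indices such that S(i_k) = S(j_k) and i_k ≠ j_k for all 1 ≤ k ≤ l. Then l ≤ εn. -/
/-- Edit distance with insertions and deletions only (no substitutions). -/
def edist {α : Type} [DecidableEq α] : List α → List α → ℕ
  | [], t => t.length
  | s@(_ :: _), [] => s.length
  | x :: xs, y :: ys =>
    if x = y then edist xs ys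
    else 1 + min (edist xs (y :: ys)) (edist (x :: xs) ys)
termination_by s t => s.length + t.length
decreasing_by all_goals simp [List.length] <;> omega

def lcsLen {α : Type} [DecidableEq α] : List α → List α → ℕ
  | [], _ => 0
  | _ :: _, [] => 0
  | x :: xs, y :: ys =>
    if x = y then 1 + lcsLen xs ys
    else max (lcsLen xs (y :: ys)) (lcsLen (x :: xs) ys)
termination_by s t => s.length + t.length
decreasing_by all_goals simp [List.length] <;> omega


theorem edist_add_lcs {α : Type} [DecidableEq α] (s t : List α) :
    edist s t + 2 * lcsLen s t = s.length + t.length := by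
  induction s, t using edist.induct <;>
    simp_all [_root_.edist, lcsLen] <;> omega


theorem length_le_lcsLen {α : Type} [DecidableEq α] (s t c : List α)
    (hs : List.Sublist c s) (ht : List.Sublist c t) : c.length ≤ lcsLen s t := by
  induction s, t using edist.induct generalizing c with
  | case1 t => simp_all
  | case2 x xs => simp_all
  | case3 xs y ys ih =>
    cases c with
    | nil => simp
    | cons z zs =>
      simp only [lcsLen, eq_self_iff_true, if_true]
      by_cases hz : z = y
      · subst hz
        have h1 : List.Sublist zs xs := List.cons_sublist_cons.mp hs
        have h2 : List.Sublist zs ys := List.cons_sublist_cons.mp ht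
        have := ih zs h1 h2
        simp only [List.length_cons]
        omega
      · have h1 : List.Sublist (z :: zs) xs := by
          cases hs with
          | cons _ h => exact h
          | cons_cons => exact absurd rfl hz
        have h2 : List.Sublist (z :: zs) ys := by
          cases ht with
          | cons _ h => exact h
          | cons_cons => exact absurd rfl hz
        have := ih _ h1 h2
        omega
  | case4 x xs y ys hxy ih1 ih2 =>
    simp only [lcsLen, if_neg hxy, le_max_iff]
    cases c with
    | nil => simp
    | cons z zs =>
      by_cases hz : z = x
      · right
        apply ih2
        · exact hs
        · subst hz
          cases ht with
          | cons _ h => exact h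
          | cons_cons h => exact absurd rfl hxy
      · left
        apply ih1
        · cases hs with
          | cons _ h => exact h
          | cons_cons => exact absurd rfl hz
        · exact ht

theorem ofFn_get_sublist {α : Type} {A : List α} {s : ℕ} (g : Fin s → ℕ)
    (hg : StrictMono g) (hlt : ∀ t, g t < A.length) :
    List.Sublist (List.ofFn fun t => A.get ⟨g t, hlt t⟩) A := by
  rw [List.sublist_iff_exists_fin_orderEmbedding_get_eq]
  have hlen : (List.ofFn fun t => A.get ⟨g t, hlt t⟩).length = s := List.length_ofFn
  refine ⟨OrderEmbedding.ofStrictMono (fun ix => ⟨g (Fin.cast hlen ix), hlt _⟩) ?_, ?_⟩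
  · intro a b hab
    exact hg (by exact hab)
  · intro ix
    simp only [OrderEmbedding.coe_ofStrictMono, List.get_eq_getElem, List.getElem_ofFn]
    rfl

theorem block_bound {α : Type} [DecidableEq α] (ε : ℝ) (S : List α)
    (hsync : ∀ i j k : ℕ, i < j → j < k → k ≤ S.length →
      (1 - ε) * ((k : ℝ) - i) < (edist ((S.drop i).take (j - i)) ((S.drop j).take (k - j)) : ℝ))
    (i j K s : ℕ) (hij : i < j) (hjK : j < K) (hK : K ≤ S.length)
    (e f : Fin s → ℕ) (he : StrictMono e) (hf : StrictMono f)
    (hei : ∀ t, i ≤ e t) (hej : ∀ t, e t < j) (hfj : ∀ t, j ≤ f t) (hfK : ∀ t, f t < K)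
    (hval : ∀ t (h1 : e t < S.length) (h2 : f t < S.length), S.get ⟨e t, h1⟩ = S.get ⟨f t, h2⟩) :
    2 * (s : ℝ) ≤ ε * ((K : ℝ) - i) := by
  set A := (S.drop i).take (j - i) with hA
  set B := (S.drop j).take (K - j) with hB
  have hjS : j ≤ S.length := le_of_lt (lt_of_lt_of_le hjK hK)
  have hAlen : A.length = j - i := by
    simp [hA, List.length_take, List.length_drop]
    omega
  have hBlen : B.length = K - j := by
    simp [hB, List.length_take, List.length_drop]
    omega
  -- positions in A and B
  have hgA : ∀ t : Fin s, e t - i < A.length := by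
    intro t; rw [hAlen]; have := hei t; have := hej t; omega
  have hgB : ∀ t : Fin s, f t - j < B.length := by
    intro t; rw [hBlen]; have := hfj t; have := hfK t; omega
  have hAget : ∀ (t : Fin s) (h : e t - i < A.length),
      A.get ⟨e t - i, h⟩ = S.get ⟨e t, lt_of_lt_of_le (lt_trans (hej t) hjK) hK⟩ := by
    intro t h
    have h1 := hei t
    simp only [hA, List.get_eq_getElem, List.getElem_take, List.getElem_drop]
    congr 1
    omega
  have hBget : ∀ (t : Fin s) (h : f t - j < B.length),
      B.get ⟨f t - j, h⟩ = S.get ⟨f t, lt_of_lt_of_le (hfK t) hK⟩ := by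
    intro t h
    have h1 := hfj t
    simp only [hB, List.get_eq_getElem, List.getElem_take, List.getElem_drop]
    congr 1
    omega
  have hmonoA : StrictMono fun t : Fin s => e t - i := by
    intro a b hab
    show e a - i < e b - i
    have := he hab; have := hei a; have := hei b; omega
  have hmonoB : StrictMono fun t : Fin s => f t - j := by
    intro a b hab
    show f a - j < f b - j
    have := hf hab; have := hfj a; have := hfj b; omega
  have hsubA := ofFn_get_sublist (fun t : Fin s => e t - i) hmonoA hgA
  have hsubB := ofFn_get_sublist (fun t : Fin s => f t - j) hmonoB hgB
  have heqL : (List.ofFn fun t : Fin s => A.get ⟨e t - i, hgA t⟩)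
      = (List.ofFn fun t : Fin s => B.get ⟨f t - j, hgB t⟩) := by
    congr 1
    funext t
    rw [hAget t (hgA t), hBget t (hgB t)]
    exact hval t _ _
  rw [heqL] at hsubA
  have hlcs : s ≤ lcsLen A B := by
    have := length_le_lcsLen A B _ hsubA hsubB
    simpa using this
  have hed := edist_add_lcs A B
  rw [hAlen, hBlen] at hed
  have hedle : edist A B + 2 * s ≤ K - i := by omega
  have hsy := hsync i j K hij hjK hK
  rw [← hA, ← hB] at hsy
  have hcast : (edist A B : ℝ) + 2 * s ≤ (K : ℝ) - i := by
    have hiK : i ≤ K := by omega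
    have := (Nat.cast_le (α := ℝ)).mpr hedle
    push_cast at this ⊢
    rw [Nat.cast_sub hiK] at this
    linarith
  nlinarith [hsy, hcast]

theorem key_lemma {α : Type} [DecidableEq α] (ε : ℝ) (hε : 0 ≤ ε) (S : List α)
    (hsync : ∀ i j k : ℕ, i < j → j < k → k ≤ S.length →
      (1 - ε) * ((k : ℝ) - i) < (edist ((S.drop i).take (j - i)) ((S.drop j).take (k - j)) : ℝ)) :
    ∀ m : ℕ, ∀ c d : ℕ → ℕ,
      (∀ t1 t2, t1 < t2 → t2 < m → c t1 < c t2) →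
      (∀ t1 t2, t1 < t2 → t2 < m → d t1 < d t2) →
      (∀ t, t < m → c t < d t) →
      (∀ t, t < m → d t < S.length) →
      (∀ t, t < m → ∀ (h1 : c t < S.length) (h2 : d t < S.length),
        S.get ⟨c t, h1⟩ = S.get ⟨d t, h2⟩) →
      0 < m →
      2 * (m : ℝ) ≤ ε * (((S.length : ℝ) - c 0) + ((S.length : ℝ) - d 0)) := by
  intro m
  induction m using Nat.strong_induction_on with
  | _ m IH =>
  intro c d hc hd hcd hdn hval hm
  set n := S.length with hn
  set j := d 0 with hj
  -- find the block boundary s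
  obtain ⟨s, hs1, hs2, hslt, hrest⟩ :
      ∃ s, 0 < s ∧ s ≤ m ∧ (∀ t, t < s → c t < j) ∧ (s = m ∨ s < m ∧ j ≤ c s) := by
    by_cases hex : ∃ t, t < m ∧ j ≤ c t
    · refine ⟨Nat.find hex, ?_, ?_, ?_, ?_⟩
      · have h0 : Nat.find hex ≠ 0 := by
          intro h0
          have hsp := Nat.find_spec hex
          rw [h0] at hsp
          exact absurd hsp.2 (not_le.mpr (hcd 0 hm))
        exact Nat.pos_of_ne_zero h0
      · exact le_of_lt (Nat.find_spec hex).1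
      · intro t ht
        have h2 := Nat.find_min hex ht
        push_neg at h2
        by_cases htm : t < m
        · exact h2 htm
        · exact absurd (lt_of_lt_of_le ht (le_of_lt (Nat.find_spec hex).1)) htm
      · exact Or.inr ⟨(Nat.find_spec hex).1, (Nat.find_spec hex).2⟩
    · push_neg at hex
      exact ⟨m, hm, le_refl m, fun t ht => hex t ht, Or.inl rfl⟩
  set i := c 0 with hi
  set K := d (s - 1) + 1 with hK
  have hs1m : s - 1 < m := by omega
  have hij : i < j := hcd 0 hm
  have hjds : j ≤ d (s - 1) := by
    rcases Nat.eq_zero_or_pos (s - 1) with h | h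
    · rw [h]
    · exact le_of_lt (hd 0 (s - 1) h hs1m)
  have hjK : j < K := by omega
  have hKn : K ≤ n := hdn (s - 1) hs1m
  -- block bound
  have hblock : 2 * (s : ℝ) ≤ ε * ((K : ℝ) - i) := by
    refine block_bound ε S hsync i j K s hij hjK hKn
      (fun t : Fin s => c t) (fun t : Fin s => d t) ?_ ?_ ?_ ?_ ?_ ?_ ?_
    · intro a b hab
      exact hc a b hab (lt_of_lt_of_le b.2 hs2)
    · intro a b hab
      exact hd a b hab (lt_of_lt_of_le b.2 hs2)
    · intro t
      show c 0 ≤ c (t : ℕ)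
      rcases Nat.eq_zero_or_pos (t : ℕ) with h | h
      · rw [h]
      · exact le_of_lt (hc 0 t h (lt_of_lt_of_le t.2 hs2))
    · intro t
      exact hslt t t.2
    · intro t
      show d 0 ≤ d (t : ℕ)
      rcases Nat.eq_zero_or_pos (t : ℕ) with h | h
      · rw [h]
      · exact le_of_lt (hd 0 t h (lt_of_lt_of_le t.2 hs2))
    · intro t
      show d (t : ℕ) < K
      have hts : (t : ℕ) ≤ s - 1 := by omega
      rcases eq_or_lt_of_le hts with h | h
      · rw [h]; omega
      · have := hd t (s - 1) h hs1m; omega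
    · intro t h1 h2
      exact hval t (lt_of_lt_of_le t.2 hs2) h1 h2
  have hin : (i : ℝ) < n := by
    have : i < n := by have := hcd 0 hm; have := hdn 0 hm; omega
    exact_mod_cast this
  have hjn : (j : ℝ) < n := by
    have : j < n := hdn 0 hm
    exact_mod_cast this
  have hKn' : (K : ℝ) ≤ n := by exact_mod_cast hKn
  rcases hrest with hsm | ⟨hsltm, hjcs⟩
  · -- s = m : single block
    subst hsm
    have h1 : (K : ℝ) - i ≤ ((n : ℝ) - i) + ((n : ℝ) - j) := by linarith
    calc 2 * (s : ℝ) ≤ ε * ((K : ℝ) - i) := hblock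
      _ ≤ ε * (((n : ℝ) - i) + ((n : ℝ) - j)) := by
          apply mul_le_mul_of_nonneg_left h1 hε
  · -- recursive call on the tail
    have hrec := IH (m - s) (by omega) (fun t => c (s + t)) (fun t => d (s + t))
      (fun t1 t2 h12 h2m => hc (s + t1) (s + t2) (by omega) (by omega))
      (fun t1 t2 h12 h2m => hd (s + t1) (s + t2) (by omega) (by omega))
      (fun t htm => hcd (s + t) (by omega))
      (fun t htm => hdn (s + t) (by omega))
      (fun t htm h1 h2 => hval (s + t) (by omega) h1 h2)
      (by omega)
    simp only [Nat.add_zero] at hrec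
    have hcast : ((m - s : ℕ) : ℝ) = (m : ℝ) - s := by
      rw [Nat.cast_sub hs2]
    rw [hcast] at hrec
    have hKds : K ≤ d s := by
      have := hd (s - 1) s (by omega) hsltm
      omega
    have hjcs' : (j : ℝ) ≤ (c s : ℝ) := by exact_mod_cast hjcs
    have hKds' : (K : ℝ) ≤ (d s : ℝ) := by exact_mod_cast hKds
    have hsum : ((K : ℝ) - i) + (((n : ℝ) - c s) + ((n : ℝ) - d s))
        ≤ ((n : ℝ) - i) + ((n : ℝ) - j) := by linarith
    calc 2 * (m : ℝ) = 2 * (s : ℝ) + 2 * ((m : ℝ) - s) := by ring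
      _ ≤ ε * ((K : ℝ) - i) + ε * (((n : ℝ) - c s) + ((n : ℝ) - d s)) := by linarith
      _ = ε * (((K : ℝ) - i) + (((n : ℝ) - c s) + ((n : ℝ) - d s))) := by ring
      _ ≤ ε * (((n : ℝ) - i) + ((n : ℝ) - j)) := mul_le_mul_of_nonneg_left hsum hε

/-- Self-matching bound for ε-synchronization strings: if `S` is an ε-synchronization
string of length `n` (i.e. `ED(S[i,j), S[j,k)) > (1−ε)(k−i)` for all `i < j < k ≤ n`,
here 0-indexed), and `i₁ < ⋯ < i_l`, `j₁ < ⋯ < j_l` are positions with `S(i_t) = S(j_t)`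
and `i_t ≠ j_t` for all `t`, then `l ≤ εn`. -/
theorem stmt_2 {α : Type} [DecidableEq α] (ε : ℝ) (hε : 0 < ε) (hε1 : ε < 1)
    (S : List α)
    (hsync : ∀ i j k : ℕ, i < j → j < k → k ≤ S.length →
      (1 - ε) * ((k : ℝ) - i) < (edist ((S.drop i).take (j - i)) ((S.drop j).take (k - j)) : ℝ))
    (l : ℕ) (I J : Fin l → Fin S.length) (hI : StrictMono I) (hJ : StrictMono J)
    (heq : ∀ t, S.get (I t) = S.get (J t)) (hne : ∀ t, I t ≠ J t) :
    (l : ℝ) ≤ ε * S.length := by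
  rcases Nat.eq_zero_or_pos l with hl | hl
  · subst hl
    simp only [Nat.cast_zero]
    exact mul_nonneg hε.le (Nat.cast_nonneg _)
  · have hmain := key_lemma ε hε.le S hsync l
      (fun t => if h : t < l then min ((I ⟨t, h⟩ : ℕ)) ((J ⟨t, h⟩ : ℕ)) else 0)
      (fun t => if h : t < l then max ((I ⟨t, h⟩ : ℕ)) ((J ⟨t, h⟩ : ℕ)) else 0)
      ?_ ?_ ?_ ?_ ?_ hl
    · simp only [dif_pos hl] at hmain
      have hc0 : (0 : ℝ) ≤ ((min ((I ⟨0, hl⟩ : ℕ)) ((J ⟨0, hl⟩ : ℕ)) : ℕ) : ℝ) :=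
        Nat.cast_nonneg _
      have hd0 : (0 : ℝ) ≤ ((max ((I ⟨0, hl⟩ : ℕ)) ((J ⟨0, hl⟩ : ℕ)) : ℕ) : ℝ) :=
        Nat.cast_nonneg _
      nlinarith [hmain]
    · intro t1 t2 h12 h2l
      have h1l : t1 < l := lt_trans h12 h2l
      simp only [dif_pos h1l, dif_pos h2l]
      have hIlt : (I ⟨t1, h1l⟩ : ℕ) < (I ⟨t2, h2l⟩ : ℕ) :=
        Fin.lt_def.mp (hI (Fin.mk_lt_mk.mpr h12))
      have hJlt : (J ⟨t1, h1l⟩ : ℕ) < (J ⟨t2, h2l⟩ : ℕ) :=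
        Fin.lt_def.mp (hJ (Fin.mk_lt_mk.mpr h12))
      omega
    · intro t1 t2 h12 h2l
      have h1l : t1 < l := lt_trans h12 h2l
      simp only [dif_pos h1l, dif_pos h2l]
      have hIlt : (I ⟨t1, h1l⟩ : ℕ) < (I ⟨t2, h2l⟩ : ℕ) :=
        Fin.lt_def.mp (hI (Fin.mk_lt_mk.mpr h12))
      have hJlt : (J ⟨t1, h1l⟩ : ℕ) < (J ⟨t2, h2l⟩ : ℕ) :=
        Fin.lt_def.mp (hJ (Fin.mk_lt_mk.mpr h12))
      omega
    · intro t ht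
      simp only [dif_pos ht]
      have hne' : (I ⟨t, ht⟩ : ℕ) ≠ (J ⟨t, ht⟩ : ℕ) :=
        fun hv => hne ⟨t, ht⟩ (Fin.val_injective hv)
      omega
    · intro t ht
      simp only [dif_pos ht]
      have h1 := (I ⟨t, ht⟩).2
      have h2 := (J ⟨t, ht⟩).2
      omega
    · intro t ht h1 h2
      simp only [dif_pos ht] at h1 h2 ⊢
      by_cases hle : (I ⟨t, ht⟩ : ℕ) ≤ (J ⟨t, ht⟩ : ℕ)
      · simp only [min_eq_left hle, max_eq_right hle] at h1 h2 ⊢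
        rw [show (⟨(I ⟨t, ht⟩ : ℕ), h1⟩ : Fin S.length) = I ⟨t, ht⟩ from Fin.eta _ _,
            show (⟨(J ⟨t, ht⟩ : ℕ), h2⟩ : Fin S.length) = J ⟨t, ht⟩ from Fin.eta _ _]
        exact heq ⟨t, ht⟩
      · have hle' : (J ⟨t, ht⟩ : ℕ) ≤ (I ⟨t, ht⟩ : ℕ) := le_of_not_ge hle
        simp only [min_eq_right hle', max_eq_left hle'] at h1 h2 ⊢
        rw [show (⟨(J ⟨t, ht⟩ : ℕ), h1⟩ : Fin S.length) = J ⟨t, ht⟩ from Fin.eta _ _,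
            show (⟨(I ⟨t, ht⟩ : ℕ), h2⟩ : Fin S.length) = I ⟨t, ht⟩ from Fin.eta _ _]
        exact (heq ⟨t, ht⟩).symm
end

section
/- Let M be a non-crossing matching between strings S and S' where S is partitioned into consecutive blocks of length N. Suppose we remove all edges incident to every block S'(i) of S' whose projection under M spans at least w+1 = 1/ε + 2 consecutive blocks of S (for ε ≤ 1/3). Then the resulting matching has at most (1+3ε) times as many unmatched vertices as M did. -/
/-- `P` is a non-crossing matching between `S` and `S'`: a list of index pairs, strictly
increasing in both coordinates, each pair consisting of valid positions holding equal
symbols. -/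
def IsNCMatching {α : Type} (S S' : List α) (P : List (ℕ × ℕ)) : Prop :=
  (P.map Prod.fst).Chain' (· < ·) ∧ (P.map Prod.snd).Chain' (· < ·) ∧
    ∀ p ∈ P, p.1 < S.length ∧ p.2 < S'.length ∧ S[p.1]? = S'[p.2]?

/-- The number of unmatched vertices of a matching of size `m` between `S` and `S'`. -/
noncomputable def unmatched {α : Type} (S S' : List α) (m : ℕ) : ℝ :=
  ((S.length : ℝ) - m) + ((S'.length : ℝ) - m)

set_option maxHeartbeats 1600000

/-- Window-limiting step: let `M` (given as `P`) be a non-crossing matching between `S` and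
`S'`, both partitioned into blocks of length `N` (block of position `a` is `a/N`). Call a
block `i` of `S'` *bad* if its projection under `M` spans at least `w+1` consecutive blocks
of `S`, where `w + 1 = 1/ε + 2`. If `P'` is obtained from `P` by removing all edges incident
to bad blocks, then `P'` has at most `(1+3ε)` times as many unmatched vertices as `P`. -/
theorem stmt_3 {α : Type} [DecidableEq α] (S S' : List α) (N : ℕ) (hN : 0 < N)
    (hSlen : N ∣ S.length) (hS'len : N ∣ S'.length)
    (ε : ℝ) (hε : 0 < ε) (hε1 : ε ≤ 1 / 3) (w : ℕ) (hw : (w : ℝ) + 1 = 1 / ε + 2)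
    (P : List (ℕ × ℕ)) (hM : IsNCMatching S S' P)
    (P' : List (ℕ × ℕ)) (hsub : P'.Sublist P)
    (hmem : ∀ p, p ∈ P' ↔ p ∈ P ∧
      ¬ ∃ q ∈ P, ∃ q' ∈ P, q.2 / N = p.2 / N ∧ q'.2 / N = p.2 / N ∧ q.1 / N + w ≤ q'.1 / N) :
    unmatched S S' P'.length ≤ (1 + 3 * ε) * unmatched S S' P.length := by
  classical
  obtain ⟨h1, h2, h3⟩ := hM
  -- pairwise strict monotonicity
  have hp1 : P.Pairwise (fun p q : ℕ × ℕ => p.1 < q.1) := by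
    have := List.isChain_iff_pairwise.mp h1; rwa [List.pairwise_map] at this
  have hp2 : P.Pairwise (fun p q : ℕ × ℕ => p.2 < q.2) := by
    have := List.isChain_iff_pairwise.mp h2; rwa [List.pairwise_map] at this
  have hpair : ∀ p ∈ P, ∀ q ∈ P, p ≠ q →
      (p.1 < q.1 ∧ p.2 < q.2) ∨ (q.1 < p.1 ∧ q.2 < p.2) := by
    intro p hp q hq hne
    have h : P.Pairwise (fun p q : ℕ × ℕ =>
        (p.1 < q.1 ∧ p.2 < q.2) ∨ (q.1 < p.1 ∧ q.2 < p.2)) :=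
      (hp1.and hp2).imp (fun h => Or.inl h)
    haveI : Std.Symm (fun p q : ℕ × ℕ =>
        (p.1 < q.1 ∧ p.2 < q.2) ∨ (q.1 < p.1 ∧ q.2 < p.2)) := ⟨fun a b hab => by tauto⟩
    exact h.forall hp hq hne
  have mono21 : ∀ p ∈ P, ∀ q ∈ P, p.1 ≤ q.1 → p.2 ≤ q.2 := by
    intro p hp q hq hle
    by_cases hne : p = q
    · subst hne; exact le_rfl
    · rcases hpair p hp q hq hne with ⟨ha, hb⟩ | ⟨ha, hb⟩ <;> omega
  have mono12 : ∀ p ∈ P, ∀ q ∈ P, p.2 ≤ q.2 → p.1 ≤ q.1 := by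
    intro p hp q hq hle
    by_cases hne : p = q
    · subst hne; exact le_rfl
    · rcases hpair p hp q hq hne with ⟨ha, hb⟩ | ⟨ha, hb⟩ <;> omega
  have hnodup : P.Nodup := hp1.imp (fun {a b} h => by rintro rfl; exact lt_irrefl _ h)

  -- abbreviate the bad-block predicate
  set bad : ℕ → Prop := fun i => ∃ q ∈ P, ∃ q' ∈ P,
      q.2 / N = i ∧ q'.2 / N = i ∧ q.1 / N + w ≤ q'.1 / N with hbad
  have hmem' : ∀ p, p ∈ P' ↔ p ∈ P ∧ ¬ bad (p.2 / N) := hmem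
  -- nodup facts
  have hnd1 : (P.map Prod.fst).Nodup :=
    (List.isChain_iff_pairwise.mp h1).imp (fun h => Nat.ne_of_lt h)
  have hnd2 : (P.map Prod.snd).Nodup :=
    (List.isChain_iff_pairwise.mp h2).imp (fun h => Nat.ne_of_lt h)
  have hP'nd : P'.Nodup := hsub.nodup hnodup
  -- basic length bounds
  have hcard_le : ∀ (l : List ℕ) (n : ℕ), l.Nodup → (∀ x ∈ l, x < n) → l.length ≤ n := by
    intro l n hnd hlt
    have hsb : l.toFinset ⊆ Finset.range n := by
      intro x hx
      simp only [List.mem_toFinset] at hx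
      exact Finset.mem_range.mpr (hlt x hx)
    have := Finset.card_le_card hsb
    rwa [List.toFinset_card_of_nodup hnd, Finset.card_range] at this
  have hmL : P.length ≤ S.length := by
    have := hcard_le (P.map Prod.fst) S.length hnd1 (by
      intro x hx
      obtain ⟨p, hp, rfl⟩ := List.mem_map.mp hx
      exact (h3 p hp).1)
    simpa using this
  have hmL' : P.length ≤ S'.length := by
    have := hcard_le (P.map Prod.snd) S'.length hnd2 (by
      intro x hx
      obtain ⟨p, hp, rfl⟩ := List.mem_map.mp hx
      exact (h3 p hp).2.1)
    simpa using this
  -- the set of bad blocks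
  set B : Finset ℕ := (Finset.range S'.length).filter bad with hB
  -- Step A : P' is as long as the filter of P by goodness
  have hP'len : P'.length = (P.filter (fun p => decide (¬ bad (p.2 / N)))).length := by
    rw [← List.toFinset_card_of_nodup hP'nd,
      ← List.toFinset_card_of_nodup (hnodup.filter _)]
    congr 1
    ext p
    simp only [List.mem_toFinset, List.mem_filter, decide_eq_true_eq]
    exact hmem' p
  have hsplit : P.length = (P.filter (fun p => decide (¬ bad (p.2 / N)))).length
      + (P.filter (fun p => decide (bad (p.2 / N)))).length := by
    have := List.length_eq_length_filter_add (l := P) (fun p => decide (¬ bad (p.2 / N)))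
    simpa using this
  -- Step B : the removed part has length ≤ B.card * N
  have hrem : (P.filter (fun p => decide (bad (p.2 / N)))).length ≤ B.card * N := by
    set R := P.filter (fun p => decide (bad (p.2 / N))) with hR
    have hRsub : R.Sublist P := List.filter_sublist
    have hRnd : (R.map Prod.snd).Nodup := ((hRsub.map Prod.snd).nodup hnd2)
    have hlenR : R.length = (R.map Prod.snd).toFinset.card := by
      rw [List.toFinset_card_of_nodup hRnd, List.length_map]
    have hsubset : (R.map Prod.snd).toFinset ⊆
        B.biUnion (fun i => Finset.Ico (i * N) (i * N + N)) := by
      intro b hb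
      simp only [List.mem_toFinset, List.mem_map] at hb
      obtain ⟨p, hpR, rfl⟩ := hb
      rw [hR, List.mem_filter, decide_eq_true_eq] at hpR
      obtain ⟨hpP, hbadp⟩ := hpR
      refine Finset.mem_biUnion.mpr ⟨p.2 / N, ?_, ?_⟩
      · refine Finset.mem_filter.mpr ⟨Finset.mem_range.mpr ?_, hbadp⟩
        exact lt_of_le_of_lt (Nat.div_le_self _ _) (h3 p hpP).2.1
      · have hdm := Nat.div_add_mod p.2 N
        have hmod := Nat.mod_lt p.2 hN
        have hc : (p.2 / N) * N = N * (p.2 / N) := Nat.mul_comm _ _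
        simp only [Finset.mem_Ico]
        omega
    calc R.length = (R.map Prod.snd).toFinset.card := hlenR
      _ ≤ (B.biUnion (fun i => Finset.Ico (i * N) (i * N + N))).card :=
          Finset.card_le_card hsubset
      _ ≤ ∑ i ∈ B, (Finset.Ico (i * N) (i * N + N)).card := Finset.card_biUnion_le
      _ = ∑ i ∈ B, N := by
          apply Finset.sum_congr rfl
          intro i _
          rw [Nat.card_Ico]
          omega
      _ = B.card * N := by rw [Finset.sum_const, smul_eq_mul]
  -- w is at least 4
  have hw4 : 4 ≤ w := by
    have h3e : (3 : ℝ) ≤ 1 / ε := by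
      rw [le_div_iff₀ hε]; linarith
    have : (4 : ℝ) ≤ (w : ℕ) := by push_cast; linarith
    exact_mod_cast this
  -- Step C : many unmatched vertices in S
  set T : Finset ℕ := (P.map Prod.fst).toFinset with hT
  have hTcard : T.card = P.length := by
    rw [hT, List.toFinset_card_of_nodup hnd1, List.length_map]
  have hTsub : T ⊆ Finset.range S.length := by
    intro x hx
    rw [hT, List.mem_toFinset] at hx
    obtain ⟨p, hp, rfl⟩ := List.mem_map.mp hx
    exact Finset.mem_range.mpr (h3 p hp).1
  set F : Finset ℕ := Finset.range S.length \ T with hF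
  have hFcard : F.card = S.length - P.length := by
    rw [hF, Finset.card_sdiff_of_subset hTsub, Finset.card_range, hTcard]
  -- choose witnesses for each bad block
  have hwit : ∀ i : ℕ, ∃ qq : (ℕ × ℕ) × (ℕ × ℕ), i ∈ B →
      qq.1 ∈ P ∧ qq.2 ∈ P ∧ qq.1.2 / N = i ∧ qq.2.2 / N = i ∧
      qq.1.1 / N + w ≤ qq.2.1 / N := by
    intro i
    by_cases hi : i ∈ B
    · obtain ⟨-, q, hq, q', hq', e1, e2, e3⟩ := Finset.mem_filter.mp hi
      exact ⟨(q, q'), fun _ => ⟨hq, hq', e1, e2, e3⟩⟩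
    · exact ⟨((0, 0), (0, 0)), fun h => absurd h hi⟩
  choose Q hQ using hwit
  set G : ℕ → Finset ℕ := fun i => F ∩ Finset.Icc (Q i).1.1 (Q i).2.1 with hG
  -- G i are large
  have hGcard : ∀ i ∈ B, (w - 2) * N ≤ (G i).card := by
    intro i hi
    obtain ⟨hq, hq', e1, e2, e3⟩ := hQ i hi
    set q : ℕ × ℕ := (Q i).1
    set q' : ℕ × ℕ := (Q i).2
    -- the matched vertices in the interval
    set R2 := P.filter (fun p => decide (q.1 ≤ p.1 ∧ p.1 ≤ q'.1)) with hR2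
    have hR2sub : R2.Sublist P := List.filter_sublist
    have hTI : T ∩ Finset.Icc q.1 q'.1 = (R2.map Prod.fst).toFinset := by
      ext a
      simp only [Finset.mem_inter, hT, List.mem_toFinset, List.mem_map, Finset.mem_Icc,
        hR2, List.mem_filter, decide_eq_true_eq]
      constructor
      · rintro ⟨⟨p, hp, rfl⟩, h1, h2⟩
        exact ⟨p, ⟨hp, h1, h2⟩, rfl⟩
      · rintro ⟨p, ⟨hp, h1, h2⟩, rfl⟩
        exact ⟨⟨p, hp, rfl⟩, h1, h2⟩
    have hTIcard : (T ∩ Finset.Icc q.1 q'.1).card ≤ N := by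
      rw [hTI]
      have hnda : (R2.map Prod.fst).Nodup := (hR2sub.map Prod.fst).nodup hnd1
      have hndb : (R2.map Prod.snd).Nodup := (hR2sub.map Prod.snd).nodup hnd2
      rw [List.toFinset_card_of_nodup hnda, List.length_map, ← List.length_map (as := R2) Prod.snd,
        ← List.toFinset_card_of_nodup hndb]
      have hsubset : (R2.map Prod.snd).toFinset ⊆ Finset.Ico (i * N) (i * N + N) := by
        intro b hb
        simp only [List.mem_toFinset, List.mem_map] at hb
        obtain ⟨p, hpR, rfl⟩ := hb
        rw [hR2, List.mem_filter, decide_eq_true_eq] at hpR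
        obtain ⟨hpP, hge, hle⟩ := hpR
        have hl : q.2 ≤ p.2 := mono21 q hq p hpP hge
        have hr : p.2 ≤ q'.2 := mono21 p hpP q' hq' hle
        have hd1 : i ≤ p.2 / N := e1 ▸ Nat.div_le_div_right hl
        have hd2 : p.2 / N ≤ i := e2 ▸ Nat.div_le_div_right hr
        have hdiv : p.2 / N = i := le_antisymm hd2 hd1
        have hdm := Nat.div_add_mod p.2 N
        have hmod := Nat.mod_lt p.2 hN
        have hc : (p.2 / N) * N = N * (p.2 / N) := Nat.mul_comm _ _
        simp only [Finset.mem_Ico]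
        rw [← hdiv]
        omega
      calc (R2.map Prod.snd).toFinset.card ≤ (Finset.Ico (i * N) (i * N + N)).card :=
            Finset.card_le_card hsubset
        _ = N := by rw [Nat.card_Ico]; omega
    -- the interval is long
    have hIcc : (w - 1) * N + 2 ≤ (Finset.Icc q.1 q'.1).card := by
      rw [Nat.card_Icc]
      have hA : N * (q.1 / N) + N * w ≤ N * (q'.1 / N) := by
        rw [← Nat.mul_add]
        exact Nat.mul_le_mul_left N e3
      have hd1 := Nat.div_add_mod q.1 N
      have hd2 := Nat.div_add_mod q'.1 N
      have hm1 := Nat.mod_lt q.1 hN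
      have hm2 := Nat.mod_lt q'.1 hN
      have hN1 : 1 * N ≤ w * N := Nat.mul_le_mul_right N (by omega)
      have hww : (w - 1) * N + N = N * w := by
        rw [Nat.sub_mul, Nat.mul_comm N w]; omega
      omega
    -- Icc is covered by G i and matched part
    have hcover : Finset.Icc q.1 q'.1 ⊆ G i ∪ (T ∩ Finset.Icc q.1 q'.1) := by
      intro a ha
      by_cases haT : a ∈ T
      · exact Finset.mem_union_right _ (Finset.mem_inter.mpr ⟨haT, ha⟩)
      · refine Finset.mem_union_left _ ?_
        rw [hG]
        refine Finset.mem_inter.mpr ⟨Finset.mem_sdiff.mpr ⟨?_, haT⟩, ha⟩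
        have := (Finset.mem_Icc.mp ha).2
        exact Finset.mem_range.mpr (lt_of_le_of_lt this (h3 q' hq').1)
    have hcov := (Finset.card_le_card hcover).trans (Finset.card_union_le _ _)
    have h2N : 2 * N ≤ w * N := Nat.mul_le_mul_right N (by omega)
    have hww2 : (w - 2) * N + N = (w - 1) * N := by
      rw [Nat.sub_mul, Nat.sub_mul, one_mul]; omega
    omega
  -- G i are pairwise disjoint over B
  have hGdisj : (B : Set ℕ).PairwiseDisjoint G := by
    intro i hi j hj hij
    simp only [Finset.coe_mem, Finset.mem_coe] at hi hj
    obtain ⟨hqi, hqi', ei1, ei2, -⟩ := hQ i hi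
    obtain ⟨hqj, hqj', ej1, ej2, -⟩ := hQ j hj
    -- wlog structure: strict separation of intervals
    have key : ∀ a b : ℕ, a ∈ B → b ∈ B → a < b → (Q a).2.1 < (Q b).1.1 := by
      intro a b ha hb hab
      obtain ⟨hqa, hqa', ea1, ea2, -⟩ := hQ a ha
      obtain ⟨hqb, hqb', eb1, eb2, -⟩ := hQ b hb
      by_contra hcon
      push_neg at hcon
      have := mono21 (Q b).1 hqb (Q a).2 hqa' (by omega)
      have := Nat.div_le_div_right (c := N) this
      omega
    show Disjoint (G i) (G j)
    rw [Finset.disjoint_left]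
    intro a haG haG'
    rw [hG] at haG haG'
    have h1 := Finset.mem_Icc.mp (Finset.mem_inter.mp haG).2
    have h2 := Finset.mem_Icc.mp (Finset.mem_inter.mp haG').2
    rcases Nat.lt_or_ge i j with hij' | hij'
    · have := key i j hi hj hij'; omega
    · have : j < i := by omega
      have := key j i hj hi this; omega
  -- total unmatched in S
  have hFbig : B.card * ((w - 2) * N) ≤ S.length - P.length := by
    rw [← hFcard]
    calc B.card * ((w - 2) * N) = B.card • ((w - 2) * N) := (smul_eq_mul _ _).symm
      _ ≤ ∑ i ∈ B, (G i).card := Finset.card_nsmul_le_sum _ _ _ hGcard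
      _ = (B.biUnion G).card := (Finset.card_biUnion (fun i hi j hj hij =>
            hGdisj hi hj hij)).symm
      _ ≤ F.card := Finset.card_le_card (by
            intro a ha
            obtain ⟨i, -, haG⟩ := Finset.mem_biUnion.mp ha
            exact (Finset.mem_inter.mp (by rw [hG] at haG; exact haG)).1)
  -- assemble natural-number facts
  have A1 : P'.length ≤ P.length := hsub.length_le
  have A4 : P.length ≤ P'.length + B.card * N := by omega
  have A5 : B.card * ((w - 2) * N) + P.length ≤ S.length :=
    (Nat.le_sub_iff_add_le hmL).mp hFbig
  -- move to the reals
  have hcastw : ((w - 2 : ℕ) : ℝ) = (w : ℝ) - 2 := by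
    have : (2 : ℕ) ≤ w := by omega
    push_cast [this]
    ring
  have k1 : (P.length : ℝ) ≤ (P'.length : ℝ) + (B.card : ℝ) * N := by exact_mod_cast A4
  have k2 : (B.card : ℝ) * (((w : ℝ) - 2) * N) + P.length ≤ (S.length : ℝ) := by
    have := A5
    have h5 : ((B.card * ((w - 2) * N) + P.length : ℕ) : ℝ) ≤ ((S.length : ℕ) : ℝ) := by
      exact_mod_cast this
    push_cast [hcastw] at h5
    linarith
  have k3 : (P'.length : ℝ) ≤ (P.length : ℝ) := by exact_mod_cast A1
  have k4 : (P.length : ℝ) ≤ (S'.length : ℝ) := by exact_mod_cast hmL'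
  have k5 : (P.length : ℝ) ≤ (S.length : ℝ) := by exact_mod_cast hmL
  -- key numeric inequality
  have hkey : (2 : ℝ) ≤ 3 * ε * ((w : ℝ) - 2) := by
    have hwe : (w : ℝ) - 2 = 1 / ε - 1 := by linarith
    rw [hwe]
    have hne : ε ≠ 0 := ne_of_gt hε
    have hinv : ε * (1 / ε) = 1 := by field_simp
    nlinarith
  have hBN : (0 : ℝ) ≤ (B.card : ℝ) * N := by positivity
  have s1 : 2 * ((B.card : ℝ) * N) ≤ 3 * ε * ((w : ℝ) - 2) * ((B.card : ℝ) * N) := by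
    nlinarith
  have s3 : 3 * ε * ((B.card : ℝ) * (((w : ℝ) - 2) * N)) ≤
      3 * ε * ((S.length : ℝ) - P.length) := by
    apply mul_le_mul_of_nonneg_left _ (by positivity)
    linarith
  simp only [unmatched]
  nlinarith [s1, s3, k1, k3, k4, k5, hε]
end

section
/- Let M be a w-window-limited non-crossing matching between S and S' (both partitioned into blocks of length N). Suppose we remove all edges incident to every block S'(i) that has fewer than εN edges to every individual block of S. Then for ε ≤ 1/7, the number of unmatched vertices increases by a multiplicative factor of at most 1+7ε. -/
private lemma sum_countP_eq_length {β : Type} (l : List β) (f : β → ℕ) (T : Finset ℕ)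
    (h : ∀ x ∈ l, f x ∈ T) :
    ∑ i ∈ T, l.countP (fun x => f x = i) = l.length := by
  induction l with
  | nil => simp
  | cons x l ih =>
    have hx := h x (List.mem_cons_self)
    have ih' := ih (fun y hy => h y (List.mem_cons_of_mem x hy))
    simp only [List.countP_cons, List.length_cons]
    rw [Finset.sum_add_distrib, ih']
    congr 1
    have hcongr : ∀ i ∈ T, (if (decide (f x = i)) = true then 1 else 0) = if f x = i then (fun _ : ℕ => 1) i else 0 := by
      intro i _; simp
    rw [Finset.sum_congr rfl hcongr, Finset.sum_ite_eq T (f x) (fun _ => 1), if_pos hx]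

private lemma div_between {N x y z : ℕ} (hxy : x ≤ y) (hyz : y ≤ z) (h : x / N = z / N) :
    y / N = x / N := by
  have h1 := Nat.div_le_div_right (c := N) hxy
  have h2 := Nat.div_le_div_right (c := N) hyz
  omega

private lemma div_block {N x i : ℕ} (hN : 0 < N) (h : x / N = i) :
    i * N ≤ x ∧ x < (i + 1) * N := by
  constructor
  · calc i * N = x / N * N := by rw [h]
      _ ≤ x := Nat.div_mul_le_self x N
  · exact (Nat.div_lt_iff_lt_mul hN).mp (by omega)

set_option maxHeartbeats 2000000 in
/-- Sparse-block removal step: let `M` (given as `P`) be a `w`-window-limited non-crossing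
matching between `S` and `S'`, both partitioned into blocks of length `N`. If `P'` is
obtained from `P` by removing all edges incident to every block of `S'` that has fewer than
`εN` edges to every individual block of `S`, then for `ε ≤ 1/7` the number of unmatched
vertices increases by a factor of at most `1+7ε`. -/
theorem stmt_4 {α : Type} [DecidableEq α] (S S' : List α) (N : ℕ) (hN : 0 < N)
    (hSlen : N ∣ S.length) (hS'len : N ∣ S'.length)
    (ε : ℝ) (hε : 0 < ε) (hε1 : ε ≤ 1 / 7) (w : ℕ)
    (P : List (ℕ × ℕ)) (hM : IsNCMatching S S' P)
    (hWL : ∀ p ∈ P, ∀ q ∈ P, p.2 / N = q.2 / N → p.1 / N ≤ q.1 / N → q.1 / N < p.1 / N + w)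
    (P' : List (ℕ × ℕ)) (hsub : P'.Sublist P)
    (hmem : ∀ p, p ∈ P' ↔ p ∈ P ∧
      ∃ k : ℕ, ε * N ≤
        ((P.filter fun q => q.2 / N = p.2 / N ∧ q.1 / N = k).length : ℝ)) :
    unmatched S S' P'.length ≤ (1 + 7 * ε) * unmatched S S' P.length := by
  classical
  obtain ⟨h1, h2, h3⟩ := hM
  -- pairwise monotonicity in both coordinates
  have hpw : P.Pairwise (fun p q : ℕ × ℕ => p.1 < q.1 ∧ p.2 < q.2) :=
    (List.pairwise_map.mp (List.isChain_iff_pairwise.mp h1)).and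
      (List.pairwise_map.mp (List.isChain_iff_pairwise.mp h2))
  have hR' : P.Pairwise (fun p q : ℕ × ℕ => (p.1 < q.1 ↔ p.2 < q.2) ∧ (q.1 < p.1 ↔ q.2 < p.2)) :=
    hpw.imp (fun h => ⟨iff_of_true h.1 h.2, iff_of_false (by omega) (by omega)⟩)
  have hiff : ∀ p ∈ P, ∀ q ∈ P, (p.1 < q.1 ↔ p.2 < q.2) := by
    intro p hp q hq
    by_cases hpq : p = q
    · subst hpq; simp
    · haveI : Std.Symm (fun p q : ℕ × ℕ => (p.1 < q.1 ↔ p.2 < q.2) ∧ (q.1 < p.1 ↔ q.2 < p.2)) :=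
        ⟨fun a b h => ⟨h.2, h.1⟩⟩
      exact (hR'.forall hp hq hpq).1
  have hfst_nodup : (P.map Prod.fst).Nodup :=
    ((List.isChain_iff_pairwise.mp h1).imp (fun h => Nat.ne_of_lt h))
  have hsnd_nodup : (P.map Prod.snd).Nodup :=
    ((List.isChain_iff_pairwise.mp h2).imp (fun h => Nat.ne_of_lt h))
  have hPnodup : P.Nodup := hfst_nodup.of_map
  -- block-level keep predicate
  set keptB : ℕ → Prop := fun i => ∃ k : ℕ, ε * N ≤
      ((P.filter fun q => q.2 / N = i ∧ q.1 / N = k).length : ℝ) with hkeptB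
  have hmem' : ∀ p, p ∈ P' ↔ p ∈ P ∧ keptB (p.2 / N) := hmem
  set T : Finset ℕ := Finset.range (S'.length / N) with hT
  set e : ℕ → ℕ := fun i => P.countP (fun p => p.2 / N = i) with he
  have hTmem : ∀ p ∈ P, p.2 / N ∈ T := by
    intro p hp
    have hlt : p.2 < S'.length := (h3 p hp).2.1
    have : p.2 / N < S'.length / N := by
      apply (Nat.div_lt_iff_lt_mul hN).mpr
      calc p.2 < S'.length := hlt
        _ = S'.length / N * N := (Nat.div_mul_cancel hS'len).symm
    exact Finset.mem_range.mpr this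
  have hsum_m : ∑ i ∈ T, e i = P.length :=
    sum_countP_eq_length P (fun p => p.2 / N) T hTmem
  set Bad : Finset ℕ := T.filter (fun i => ¬ keptB i) with hBad
  set Rl : List (ℕ × ℕ) := P.filter (fun p => ¬ keptB (p.2 / N)) with hRl
  -- length of P' equals number of edges in kept blocks
  have hP'len : P'.length = (P.filter (fun p => keptB (p.2 / N))).length := by
    have hFnodup : (P.filter (fun p => keptB (p.2 / N))).Nodup := hPnodup.filter _
    have hP'nodup : P'.Nodup := hsub.nodup hPnodup
    have htf : P'.toFinset = (P.filter (fun p => keptB (p.2 / N))).toFinset := by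
      ext p
      simp only [List.mem_toFinset, List.mem_filter, decide_eq_true_eq, hmem' p]
    rw [← List.toFinset_card_of_nodup hP'nodup, htf, List.toFinset_card_of_nodup hFnodup]
  -- length of removed part as a sum over bad blocks
  have hcount_split : ∀ (l : List (ℕ × ℕ)), l.Sublist P →
      l.length = ∑ i ∈ T, l.countP (fun p => p.2 / N = i) := by
    intro l hl
    exact (sum_countP_eq_length l (fun p => p.2 / N) T
      (fun p hp => hTmem p (hl.mem hp))).symm
  have hRsum : Rl.length = ∑ i ∈ Bad, e i := by
    rw [hcount_split Rl (List.filter_sublist (l := P))]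
    rw [hBad, Finset.sum_filter]
    apply Finset.sum_congr rfl
    intro i _
    by_cases hk : keptB i
    · rw [if_neg (by simpa using hk)]
      rw [List.countP_eq_zero]
      intro p hp
      rw [hRl] at hp
      simp only [List.mem_filter, decide_eq_true_eq] at hp
      simp only [decide_eq_true_eq]
      intro hcontra
      exact hp.2 (hcontra ▸ hk)
    · rw [if_pos (by simpa using hk)]
      rw [hRl, List.countP_filter, he]
      apply List.countP_congr
      intro p hp
      simp only [Bool.and_eq_true, decide_eq_true_eq]
      constructor
      · intro h; exact h.1
      · intro h; exact ⟨h, by simp [h, hk]⟩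
  have hFsum : (P.filter (fun p => keptB (p.2 / N))).length = ∑ i ∈ T.filter (fun i => keptB i), e i := by
    rw [hcount_split _ (List.filter_sublist (l := P))]
    rw [Finset.sum_filter]
    apply Finset.sum_congr rfl
    intro i _
    by_cases hk : keptB i
    · rw [if_pos (by simpa using hk)]
      rw [List.countP_filter, he]
      apply List.countP_congr
      intro p hp
      simp only [Bool.and_eq_true, decide_eq_true_eq]
      constructor
      · intro h; exact h.1
      · intro h; exact ⟨h, by simp [h, hk]⟩
    · rw [if_neg (by simpa using hk)]
      rw [List.countP_eq_zero]
      intro p hp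
      simp only [List.mem_filter, decide_eq_true_eq] at hp
      simp only [decide_eq_true_eq]
      intro hcontra
      exact hk (hcontra ▸ hp.2)
  have hlen_split : P'.length + Rl.length = P.length := by
    rw [hP'len, hFsum, hRsum, hBad, ← hsum_m]
    exact Finset.sum_filter_add_sum_filter_not T _ e
  -- each block of S' holds at most N matched positions
  have he_le : ∀ i, e i ≤ N := by
    intro i
    have hsl : ((P.filter (fun p => p.2 / N = i)).map Prod.snd).Sublist (P.map Prod.snd) :=
      (List.filter_sublist (l := P)).map Prod.snd
    have hnd : ((P.filter (fun p => p.2 / N = i)).map Prod.snd).Nodup := hsl.nodup hsnd_nodup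
    have hsubI : ((P.filter (fun p => p.2 / N = i)).map Prod.snd).toFinset ⊆
        Finset.Ico (i * N) ((i + 1) * N) := by
      intro x hx
      simp only [List.mem_toFinset, List.mem_map, List.mem_filter, decide_eq_true_eq] at hx
      obtain ⟨p, ⟨_, hpi⟩, rfl⟩ := hx
      have hb := div_block hN hpi
      simp only [Finset.mem_Ico]
      exact hb
    calc e i = ((P.filter (fun p => p.2 / N = i)).map Prod.snd).length := by
          simp only [he, List.countP_eq_length_filter, List.length_map]
      _ = ((P.filter (fun p => p.2 / N = i)).map Prod.snd).toFinset.card :=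
          (List.toFinset_card_of_nodup hnd).symm
      _ ≤ (Finset.Ico (i * N) ((i + 1) * N)).card := Finset.card_le_card hsubI
      _ = N := by rw [Nat.card_Ico, Nat.succ_mul, Nat.add_sub_cancel_left]
  -- size bounds for the matching
  have hm_card : (P.map Prod.fst).toFinset.card = P.length := by
    rw [List.toFinset_card_of_nodup hfst_nodup, List.length_map]
  have hMsub : (P.map Prod.fst).toFinset ⊆ Finset.range S.length := by
    intro x hx
    simp only [List.mem_toFinset, List.mem_map] at hx
    obtain ⟨p, hp, rfl⟩ := hx
    exact Finset.mem_range.mpr (h3 p hp).1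
  have hmn : P.length ≤ S.length := by
    rw [← hm_card]
    simpa using Finset.card_le_card hMsub
  have hmn' : P.length ≤ S'.length := by
    have hM'sub : (P.map Prod.snd).toFinset ⊆ Finset.range S'.length := by
      intro x hx
      simp only [List.mem_toFinset, List.mem_map] at hx
      obtain ⟨p, hp, rfl⟩ := hx
      exact Finset.mem_range.mpr (h3 p hp).2.1
    have : (P.map Prod.snd).toFinset.card = P.length := by
      rw [List.toFinset_card_of_nodup hsnd_nodup, List.length_map]
    rw [← this]
    simpa using Finset.card_le_card hM'sub
  -- unmatched positions of S
  set U : Finset ℕ := (Finset.range S.length).filter (fun s => ∀ p ∈ P, p.1 ≠ s) with hU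
  have hUeq : U = Finset.range S.length \ (P.map Prod.fst).toFinset := by
    ext s
    simp only [hU, Finset.mem_filter, Finset.mem_sdiff, Finset.mem_range, List.mem_toFinset,
      List.mem_map]
    constructor
    · rintro ⟨h, h2⟩
      exact ⟨h, fun ⟨p, hp, hps⟩ => h2 p hp hps⟩
    · rintro ⟨h, h2⟩
      exact ⟨h, fun p hp hps => h2 ⟨p, hp, hps⟩⟩
  have hUcard : U.card = S.length - P.length := by
    rw [hUeq, Finset.card_sdiff_of_subset hMsub, Finset.card_range, hm_card]
  -- the span of blocks of S hit by block i of S'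
  set blk : ℕ → Finset ℕ :=
    fun i => ((P.filter (fun p => p.2 / N = i)).map (fun p => p.1 / N)).toFinset with hblk
  set ba : ℕ → ℕ := fun i => if h : (blk i).Nonempty then (blk i).min' h else 0 with hba
  set bb : ℕ → ℕ := fun i => if h : (blk i).Nonempty then (blk i).max' h else 0 with hbb
  set D : ℕ → Finset ℕ :=
    fun i => (Finset.Ico ((ba i + 1) * N) (bb i * N)).filter (fun s => ∀ p ∈ P, p.1 ≠ s) with hD
  have hblk_mem : ∀ i k, k ∈ blk i ↔ ∃ p ∈ P, p.2 / N = i ∧ p.1 / N = k := by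
    intro i k
    simp only [hblk, List.mem_toFinset, List.mem_map, List.mem_filter, decide_eq_true_eq]
    constructor
    · rintro ⟨p, ⟨hp, hpi⟩, rfl⟩; exact ⟨p, hp, hpi, rfl⟩
    · rintro ⟨p, hp, hpi, rfl⟩; exact ⟨p, ⟨hp, hpi⟩, rfl⟩
  have hblk_empty : ∀ i, e i = 0 → blk i = ∅ := by
    intro i hi
    rw [Finset.eq_empty_iff_forall_notMem]
    intro k hk
    obtain ⟨p, hp, hpi, _⟩ := (hblk_mem i k).mp hk
    have := List.countP_eq_zero.mp hi p hp
    simp only [decide_eq_true_eq] at this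
    exact this hpi
  have hblk_ne : ∀ i, e i ≠ 0 → (blk i).Nonempty := by
    intro i hi
    obtain ⟨p, hp, hpi⟩ := List.countP_pos_iff.mp (Nat.pos_of_ne_zero hi)
    simp only [decide_eq_true_eq] at hpi
    exact ⟨p.1 / N, (hblk_mem i _).mpr ⟨p, hp, hpi, rfl⟩⟩
  have hbounds : ∀ i (h : (blk i).Nonempty), ∀ k ∈ blk i, ba i ≤ k ∧ k ≤ bb i := by
    intro i h k hk
    simp only [hba, hbb]
    rw [dif_pos h, dif_pos h]
    exact ⟨Finset.min'_le _ _ hk, Finset.le_max' _ _ hk⟩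
  have hba_mem : ∀ i (h : (blk i).Nonempty), ba i ∈ blk i := by
    intro i h; simp only [hba]; rw [dif_pos h]; exact Finset.min'_mem _ _
  have hbb_mem : ∀ i (h : (blk i).Nonempty), bb i ∈ blk i := by
    intro i h; simp only [hbb]; rw [dif_pos h]; exact Finset.max'_mem _ _
  have hDempty : ∀ i, ¬ (blk i).Nonempty → D i = ∅ := by
    intro i h
    have hbb0 : bb i = 0 := by simp only [hbb]; rw [dif_neg h]
    rw [hD]
    simp only [hbb0, Nat.zero_mul, Finset.Ico_eq_empty_iff]
    rw [Finset.filter_eq_empty_iff]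
    intro s hs
    simp at hs
  have hDU : ∀ i, D i ⊆ U := by
    intro i s hs
    simp only [hD, Finset.mem_filter, Finset.mem_Ico] at hs
    obtain ⟨⟨hs1, hs2⟩, hs3⟩ := hs
    by_cases hne : (blk i).Nonempty
    · obtain ⟨p, hp, _, hpb⟩ := (hblk_mem i (bb i)).mp (hbb_mem i hne)
      have hb := div_block hN hpb
      have hsS : s < S.length := lt_of_lt_of_le hs2 (le_trans hb.1 (le_of_lt (h3 p hp).1))
      simp only [hU, Finset.mem_filter, Finset.mem_range]
      exact ⟨hsS, hs3⟩
    · exfalso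
      have hbb0 : bb i = 0 := by simp only [hbb]; rw [dif_neg hne]
      rw [hbb0] at hs2
      omega
  -- edges in distinct blocks of S' are block-ordered in S
  have hblk_le : ∀ i j, i < j → ∀ k ∈ blk i, ∀ l ∈ blk j, k ≤ l := by
    intro i j hij k hk l hl
    obtain ⟨p, hp, hpi, rfl⟩ := (hblk_mem i k).mp hk
    obtain ⟨q, hq, hqj, rfl⟩ := (hblk_mem j l).mp hl
    have hpb := div_block hN hpi
    have hqb := div_block hN hqj
    have hple : (i + 1) * N ≤ j * N := Nat.mul_le_mul_right N hij
    have hpq2 : p.2 < q.2 := lt_of_lt_of_le hpb.2 (le_trans hple hqb.1)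
    have hpq1 : p.1 < q.1 := (hiff p hp q hq).mpr hpq2
    exact Nat.div_le_div_right (le_of_lt hpq1)
  have hdisj : ∀ i ∈ Bad, ∀ j ∈ Bad, i ≠ j → Disjoint (D i) (D j) := by
    have key : ∀ i j, i < j → Disjoint (D i) (D j) := by
      intro i j hij
      by_cases hne : (blk i).Nonempty
      · by_cases hne' : (blk j).Nonempty
        · rw [Finset.disjoint_left]
          intro s hsi hsj
          simp only [hD, Finset.mem_filter, Finset.mem_Ico] at hsi hsj
          have h1 : s < bb i * N := hsi.1.2
          have h2 : (ba j + 1) * N ≤ s := hsj.1.1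
          have h3' : bb i ≤ ba j := hblk_le i j hij _ (hbb_mem i hne) _ (hba_mem j hne')
          have : bb i * N ≤ ba j * N := Nat.mul_le_mul_right N h3'
          have : s < (ba j + 1) * N :=
            lt_of_lt_of_le h1 (le_trans this (Nat.mul_le_mul_right N (Nat.le_succ _)))
          omega
        · rw [hDempty j hne']; exact Finset.disjoint_empty_right _
      · rw [hDempty i hne]; exact Finset.disjoint_empty_left _
    intro i _ j _ hij
    rcases lt_or_gt_of_ne hij with h | h
    · exact key i j h
    · exact (key j i h).symm
  have hB_bound : ∑ i ∈ Bad, (D i).card ≤ U.card := by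
    rw [← Finset.card_biUnion hdisj]
    exact Finset.card_le_card (Finset.biUnion_subset.mpr fun i _ => hDU i)
  have cast_sub_ge : ∀ m k : ℕ, (m : ℝ) - k ≤ ((m - k : ℕ) : ℝ) := by
    intro m k
    rcases le_total k m with h | h
    · rw [Nat.cast_sub h]
    · rw [Nat.sub_eq_zero_of_le h, Nat.cast_zero]
      have : (m : ℝ) ≤ k := Nat.cast_le.mpr h
      linarith
  -- interior unmatched positions bound
  have hC2 : ∀ i, ((bb i : ℝ) - ba i - 1) * N - e i ≤ ((D i).card : ℝ) := by
    intro i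
    by_cases hne : (blk i).Nonempty
    · set Dm := (Finset.Ico ((ba i + 1) * N) (bb i * N)).filter
        (fun s => ¬ ∀ p ∈ P, p.1 ≠ s) with hDm
      have hDm_sub : Dm ⊆ ((P.filter (fun p => p.2 / N = i)).map Prod.fst).toFinset := by
        intro s hs
        simp only [hDm, Finset.mem_filter, Finset.mem_Ico] at hs
        obtain ⟨⟨hs1, hs2⟩, hs3⟩ := hs
        push_neg at hs3
        obtain ⟨q, hq, rfl⟩ := hs3
        obtain ⟨pm, hpm, hpmi, hpma⟩ := (hblk_mem i (ba i)).mp (hba_mem i hne)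
        obtain ⟨pM, hpM, hpMi, hpMb⟩ := (hblk_mem i (bb i)).mp (hbb_mem i hne)
        have hpmb := div_block hN hpma
        have hpMb' := div_block hN hpMb
        have hq1 : pm.1 < q.1 := lt_of_lt_of_le hpmb.2 hs1
        have hq2 : q.1 < pM.1 := lt_of_lt_of_le hs2 hpMb'.1
        have hq1' : pm.2 < q.2 := (hiff pm hpm q hq).mp hq1
        have hq2' : q.2 < pM.2 := (hiff q hq pM hpM).mp hq2
        have hqi : q.2 / N = i := by
          have := div_between (N := N) (le_of_lt hq1') (le_of_lt hq2') (by rw [hpmi, hpMi])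
          rw [this, hpmi]
        simp only [List.mem_toFinset, List.mem_map, List.mem_filter, decide_eq_true_eq]
        exact ⟨q, ⟨hq, hqi⟩, rfl⟩
      have hDm_card : Dm.card ≤ e i := by
        calc Dm.card ≤ ((P.filter (fun p => p.2 / N = i)).map Prod.fst).toFinset.card :=
              Finset.card_le_card hDm_sub
          _ ≤ ((P.filter (fun p => p.2 / N = i)).map Prod.fst).length := List.toFinset_card_le _
          _ = e i := by simp only [List.length_map, he, List.countP_eq_length_filter]
      have hD_eq : (D i).card + Dm.card = (Finset.Ico ((ba i + 1) * N) (bb i * N)).card := by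
        simp only [hD, hDm]
        exact Finset.card_filter_add_card_filter_not (fun s => ∀ p ∈ P, p.1 ≠ s)
      have hIcoCard : (Finset.Ico ((ba i + 1) * N) (bb i * N)).card
          = bb i * N - (ba i + 1) * N := Nat.card_Ico _ _
      have c1 : ((bb i : ℝ)) * N - ((ba i : ℝ) + 1) * N
          ≤ ((Finset.Ico ((ba i + 1) * N) (bb i * N)).card : ℝ) := by
        have := cast_sub_ge (bb i * N) ((ba i + 1) * N)
        rw [hIcoCard]
        push_cast at this ⊢
        linarith
      have c2 : ((D i).card : ℝ) + (Dm.card : ℝ)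
          = ((Finset.Ico ((ba i + 1) * N) (bb i * N)).card : ℝ) := by
        exact_mod_cast congrArg (Nat.cast : ℕ → ℝ) hD_eq
      have c3 : (Dm.card : ℝ) ≤ (e i : ℝ) := Nat.cast_le.mpr hDm_card
      nlinarith [c1, c2, c3]
    · have hbb0 : bb i = 0 := by simp only [hbb]; rw [dif_neg hne]
      have hba0 : ba i = 0 := by simp only [hba]; rw [dif_neg hne]
      rw [hbb0, hba0]
      have hDnn : (0 : ℝ) ≤ ((D i).card : ℝ) := Nat.cast_nonneg _
      have henn : (0 : ℝ) ≤ (e i : ℝ) := Nat.cast_nonneg _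
      have hNnn : (0 : ℝ) ≤ (N : ℝ) := Nat.cast_nonneg _
      push_cast
      nlinarith
  -- sparse block bound
  have hC3 : ∀ i ∈ Bad, (e i : ℝ) ≤ ((bb i : ℝ) - ba i + 1) * (ε * N) := by
    intro i hi
    have hk : ¬ keptB i := (Finset.mem_filter.mp hi).2
    have hN' : (0 : ℝ) < N := by exact_mod_cast hN
    by_cases he0 : e i = 0
    · have hb0 : blk i = ∅ := hblk_empty i he0
      have hba0 : ba i = 0 := by simp only [hba]; rw [dif_neg (by simp [hb0])]
      have hbb0 : bb i = 0 := by simp only [hbb]; rw [dif_neg (by simp [hb0])]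
      rw [he0, hba0, hbb0]
      push_cast
      nlinarith [mul_pos hε hN']
    · have hne := hblk_ne i he0
      have hab' : ba i ≤ bb i := (hbounds i hne _ (hba_mem i hne)).2
      have hsumE : (P.filter (fun p => p.2 / N = i)).length =
          ∑ k ∈ Finset.Icc (ba i) (bb i),
            (P.filter (fun p => p.2 / N = i)).countP (fun p => p.1 / N = k) := by
        refine (sum_countP_eq_length (P.filter (fun p => p.2 / N = i)) (fun p => p.1 / N)
          (Finset.Icc (ba i) (bb i)) ?_).symm
        intro p hp
        have hpmem : p.1 / N ∈ blk i := by
          simp only [hblk, List.mem_toFinset, List.mem_map]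
          exact ⟨p, hp, rfl⟩
        simp only [Finset.mem_Icc]
        exact hbounds i hne _ hpmem
      have hck : ∀ k, (((P.filter (fun p => p.2 / N = i)).countP (fun p => p.1 / N = k) : ℕ) : ℝ)
          ≤ ε * N := by
        intro k
        have heq : (P.filter (fun p => p.2 / N = i)).countP (fun p => p.1 / N = k) =
            (P.filter fun q => q.2 / N = i ∧ q.1 / N = k).length := by
          rw [List.countP_filter, ← List.countP_eq_length_filter]
          apply List.countP_congr
          intro p _
          simp only [Bool.and_eq_true, decide_eq_true_eq]
          tauto
        rw [heq]
        by_contra hcon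
        push_neg at hcon
        exact hk ⟨k, le_of_lt hcon⟩
      have hesum : (e i : ℝ) = ∑ k ∈ Finset.Icc (ba i) (bb i),
          (((P.filter (fun p => p.2 / N = i)).countP (fun p => p.1 / N = k) : ℕ) : ℝ) := by
        have he_eq : e i = (P.filter (fun p => p.2 / N = i)).length :=
          List.countP_eq_length_filter
        rw [he_eq, hsumE]
        push_cast
        rfl
      have hcard : ((Finset.Icc (ba i) (bb i)).card : ℝ) = (bb i : ℝ) - ba i + 1 := by
        rw [Nat.card_Icc, Nat.cast_sub (by omega)]
        push_cast
        ring
      rw [hesum]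
      calc ∑ k ∈ Finset.Icc (ba i) (bb i),
            (((P.filter (fun p => p.2 / N = i)).countP (fun p => p.1 / N = k) : ℕ) : ℝ)
          ≤ ∑ _k ∈ Finset.Icc (ba i) (bb i), ε * N := Finset.sum_le_sum (fun k _ => hck k)
        _ = ((Finset.Icc (ba i) (bb i)).card : ℝ) * (ε * N) := by
            rw [Finset.sum_const, nsmul_eq_mul]
        _ = ((bb i : ℝ) - ba i + 1) * (ε * N) := by rw [hcard]
  -- per-block arithmetic
  have hC4 : ∀ i ∈ Bad, 2 * (e i : ℝ) ≤ 7 * ε * (((N : ℝ) - e i) + ((D i).card : ℝ)) := by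
    intro i hi
    have hN' : (0 : ℝ) < N := by exact_mod_cast hN
    have hDnn : (0 : ℝ) ≤ ((D i).card : ℝ) := Nat.cast_nonneg _
    have heN : (e i : ℝ) ≤ N := by exact_mod_cast he_le i
    have henn : (0 : ℝ) ≤ (e i : ℝ) := Nat.cast_nonneg _
    by_cases he0 : e i = 0
    · rw [he0]
      push_cast
      have h7 : (0 : ℝ) ≤ 7 * ε := by linarith
      nlinarith
    · have hne := hblk_ne i he0
      have hab' : ba i ≤ bb i := (hbounds i hne _ (hba_mem i hne)).2
      have h2 := hC2 i
      have h3' := hC3 i hi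
      have hεN : (0 : ℝ) < ε * N := mul_pos hε hN'
      rcases le_or_gt (bb i) (ba i + 1) with hcase | hcase
      · have hd1 : (bb i : ℝ) - ba i ≤ 1 := by
          have : (bb i : ℝ) ≤ (ba i : ℝ) + 1 := by exact_mod_cast hcase
          linarith
        have h2e : (e i : ℝ) ≤ 2 * (ε * N) := by
          have := mul_le_mul_of_nonneg_right
            (show ((bb i : ℝ) - ba i + 1) ≤ 2 by linarith) hεN.le
          linarith
        have hp1 : ε * (e i : ℝ) ≤ ε * (2 * (ε * N)) := mul_le_mul_of_nonneg_left h2e hε.le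
        have hp2 : ε * (ε * N) ≤ (1 / 7) * (ε * N) := mul_le_mul_of_nonneg_right hε1 hεN.le
        have hp3 : (0 : ℝ) ≤ ε * ((D i).card : ℝ) := mul_nonneg hε.le hDnn
        nlinarith [hp1, hp2, hp3, h2e, hεN]
      · have hd2 : (2 : ℝ) ≤ (bb i : ℝ) - ba i := by
          have : (ba i : ℝ) + 2 ≤ (bb i : ℝ) := by exact_mod_cast hcase
          linarith
        have k1 : 2 * (((bb i : ℝ) - ba i) + 1) * (1 + 7 * ε) ≤ 7 * ((bb i : ℝ) - ba i) := by
          nlinarith [mul_nonneg (show (0 : ℝ) ≤ (bb i : ℝ) - ba i + 1 by linarith)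
            (show (0 : ℝ) ≤ 2 - 14 * ε by linarith), hd2]
        have k2 : (2 * (((bb i : ℝ) - ba i) + 1) * (1 + 7 * ε)) * (ε * N)
            ≤ (7 * ((bb i : ℝ) - ba i)) * (ε * N) :=
          mul_le_mul_of_nonneg_right k1 hεN.le
        have k3 : 2 * (e i : ℝ) * (1 + 7 * ε)
            ≤ 2 * ((((bb i : ℝ) - ba i) + 1) * (ε * N)) * (1 + 7 * ε) := by
          have := mul_le_mul_of_nonneg_right h3' (show (0 : ℝ) ≤ 2 * (1 + 7 * ε) by linarith)
          nlinarith [this]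
        have k4 : 7 * ε * ((((bb i : ℝ) - ba i) - 1) * N - e i) ≤ 7 * ε * ((D i).card : ℝ) := by
          apply mul_le_mul_of_nonneg_left _ (show (0 : ℝ) ≤ 7 * ε by linarith)
          nlinarith [h2]
        nlinarith [k2, k3, k4]
  -- summing up
  have hA : ∑ i ∈ Bad, ((N : ℝ) - e i) ≤ (S'.length : ℝ) - P.length := by
    have hTcard : (T.card : ℝ) * N = S'.length := by
      have : S'.length / N * N = S'.length := Nat.div_mul_cancel hS'len
      rw [hT, Finset.card_range]
      exact_mod_cast congrArg (Nat.cast : ℕ → ℝ) this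
    have hTsum : ∑ i ∈ T, ((N : ℝ) - e i) = (S'.length : ℝ) - P.length := by
      rw [Finset.sum_sub_distrib, Finset.sum_const, nsmul_eq_mul, hTcard]
      have : ∑ i ∈ T, (e i : ℝ) = (P.length : ℝ) := by
        rw [← hsum_m]
        push_cast
        rfl
      rw [this]
    rw [← hTsum]
    apply Finset.sum_le_sum_of_subset_of_nonneg
    · rw [hBad]; exact Finset.filter_subset _ _
    · intro i _ _
      have : (e i : ℝ) ≤ N := by exact_mod_cast he_le i
      linarith
  have hB : ∑ i ∈ Bad, ((D i).card : ℝ) ≤ (S.length : ℝ) - P.length := by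
    have h1 : ∑ i ∈ Bad, ((D i).card : ℝ) = ((∑ i ∈ Bad, (D i).card : ℕ) : ℝ) := by
      push_cast
      rfl
    have h2 : ((∑ i ∈ Bad, (D i).card : ℕ) : ℝ) ≤ (U.card : ℝ) := Nat.cast_le.mpr hB_bound
    have h3'' : (U.card : ℝ) = (S.length : ℝ) - P.length := by
      rw [hUcard, Nat.cast_sub hmn]
    rw [h1]
    linarith
  have hmain : 2 * (Rl.length : ℝ)
      ≤ 7 * ε * (((S.length : ℝ) - P.length) + ((S'.length : ℝ) - P.length)) := by
    have hcast : (Rl.length : ℝ) = ∑ i ∈ Bad, (e i : ℝ) := by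
      rw [hRsum]
      push_cast
      rfl
    calc 2 * (Rl.length : ℝ) = ∑ i ∈ Bad, 2 * (e i : ℝ) := by rw [hcast, Finset.mul_sum]
      _ ≤ ∑ i ∈ Bad, 7 * ε * (((N : ℝ) - e i) + ((D i).card : ℝ)) := Finset.sum_le_sum hC4
      _ = 7 * ε * ((∑ i ∈ Bad, ((N : ℝ) - e i)) + ∑ i ∈ Bad, ((D i).card : ℝ)) := by
          rw [← Finset.mul_sum, Finset.sum_add_distrib]
      _ ≤ 7 * ε * (((S.length : ℝ) - P.length) + ((S'.length : ℝ) - P.length)) := by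
          apply mul_le_mul_of_nonneg_left _ (show (0 : ℝ) ≤ 7 * ε by linarith)
          linarith [hA, hB]
  -- conclusion
  have hP'cast : (P'.length : ℝ) = (P.length : ℝ) - Rl.length := by
    have : (P'.length : ℝ) + Rl.length = P.length := by
      exact_mod_cast congrArg (Nat.cast : ℕ → ℝ) hlen_split
    linarith
  simp only [unmatched]
  rw [hP'cast]
  have hmnR : (P.length : ℝ) ≤ S.length := Nat.cast_le.mpr hmn
  have hmnR' : (P.length : ℝ) ≤ S'.length := Nat.cast_le.mpr hmn'
  nlinarith [hmain]
end
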